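/- arXiv:0908.3347 — 5 statements merged into one kernel-verified Lean document; each statement's English description precedes it below -/
import Mathlib

section
/- (Saavedra Rivano) If θ : F → G is a monoidal natural transformation between strong monoidal functors F, G : C → D and A has a right dual A* in C, then θ_{A*} is invertible, with inverse given (up to the canonical isomorphisms F(A*) ≅ (FA)* and G(A*) ≅ (GA)*) by the adjoint mate (θ_A)* of θ_A. In particular, if C is autonomous, every monoidal natural transformation between strong monoidal functors out of C is a natural isomorphism. -/
/-!
Transport the exact pairing `(A, Aᘁ)` along `F` and `G`. Monoidality of `θ` says exactly that
`θ_A ⊗ θ_{Aᘁ}` carries the coevaluation of the `F`-pairing to that of the `G`-pairing, and that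
`θ_{Aᘁ} ⊗ θ_A` carries the evaluation of the `G`-pairing back to that of the `F`-pairing. For any
two exact pairings and maps `f, g` compatible with them in this sense, the zigzag identities show
that the mate of `f` is a two-sided inverse of `g`.
-/

open CategoryTheory MonoidalCategory Functor.LaxMonoidal Functor.OplaxMonoidal

namespace CategoryTheory

variable {C D : Type*} [Category C] [Category D] [MonoidalCategory C] [MonoidalCategory D]

section PairingMate

variable {X Y X' Y' : D} [ExactPairing X Y] [ExactPairing X' Y']

-- For the chosen pairings `(X, Xᘁ)`, `(X', X'ᘁ)` this is `rightAdjointMate`.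
def pairingMate (f : X ⟶ X') : Y' ⟶ Y :=
  (ρ_ Y').inv ≫ Y' ◁ η_ X Y ≫ Y' ◁ f ▷ Y ≫ (α_ _ _ _).inv ≫ ε_ X' Y' ▷ Y ≫ (λ_ Y).hom

theorem comp_pairingMate_eq_id {f : X ⟶ X'} {g : Y ⟶ Y'}
    (hε : (g ⊗ₘ f) ≫ ε_ X' Y' = ε_ X Y) : g ≫ pairingMate f = 𝟙 Y := by
  calc g ≫ pairingMate f
      = (ρ_ Y).inv ≫ Y ◁ η_ X Y ≫ Y ◁ f ▷ Y ≫ g ▷ _ ≫ (α_ _ _ _).inv ≫ ε_ X' Y' ▷ Y ≫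
          (λ_ Y).hom := by
        rw [pairingMate, rightUnitor_inv_naturality_assoc, whisker_exchange_assoc,
          whisker_exchange_assoc]
    _ = (ρ_ Y).inv ≫ Y ◁ η_ X Y ≫ (α_ _ _ _).inv ≫ ((g ⊗ₘ f) ≫ ε_ X' Y') ▷ Y ≫ (λ_ Y).hom := by
        simp only [associator_inv_naturality_left_assoc, associator_inv_naturality_middle_assoc,
          tensorHom_def', comp_whiskerRight, Category.assoc]
    _ = 𝟙 Y := by rw [hε, reassoc_of% ExactPairing.coevaluation_evaluation]; simp

theorem pairingMate_comp_eq_id {f : X ⟶ X'} {g : Y ⟶ Y'}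
    (hη : η_ X Y ≫ (f ⊗ₘ g) = η_ X' Y') : pairingMate f ≫ g = 𝟙 Y' := by
  calc pairingMate f ≫ g
      = (ρ_ Y').inv ≫ Y' ◁ (η_ X Y ≫ (f ⊗ₘ g)) ≫ (α_ _ _ _).inv ≫ ε_ X' Y' ▷ Y' ≫ (λ_ Y').hom := by
        simp only [pairingMate, MonoidalCategory.tensorHom_def, whiskerLeft_comp, Category.assoc,
          ← leftUnitor_naturality, ← whisker_exchange_assoc, ← associator_inv_naturality_right_assoc]
    _ = 𝟙 Y' := by rw [hη, reassoc_of% ExactPairing.coevaluation_evaluation]; simp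

end PairingMate

namespace Functor

variable (F : C ⥤ D) [F.Monoidal] (X Y : C) [ExactPairing X Y]

def mapCoevaluation : 𝟙_ D ⟶ F.obj X ⊗ F.obj Y :=
  ε F ≫ F.map (η_ X Y) ≫ δ F X Y

def mapEvaluation : F.obj Y ⊗ F.obj X ⟶ 𝟙_ D :=
  μ F Y X ≫ F.map (ε_ X Y) ≫ η F

theorem mapCoevaluation_mapEvaluation :
    F.obj Y ◁ F.mapCoevaluation X Y ≫ (α_ _ _ _).inv ≫ F.mapEvaluation X Y ▷ F.obj Y =
      (ρ_ (F.obj Y)).hom ≫ (λ_ (F.obj Y)).inv := by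
  -- `F` applied to the zigzag of `(X, Y)`, stripped of its outer `δ` and `μ`, is the goal
  -- without the unit constraints `ε F`, `η F` at its two ends.
  have h := F.congr_map (ExactPairing.coevaluation_evaluation X Y)
  simp only [Functor.map_comp, Monoidal.map_whiskerLeft, Monoidal.map_whiskerRight,
    Monoidal.map_associator_inv, Monoidal.map_rightUnitor, Monoidal.map_leftUnitor_inv,
    Category.assoc, Monoidal.μ_δ_assoc, cancel_epi] at h
  simp only [← Category.assoc, cancel_mono] at h
  simp only [Category.assoc] at h
  simp only [mapCoevaluation, mapEvaluation, MonoidalCategory.whiskerLeft_comp,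
    MonoidalCategory.comp_whiskerRight, Category.assoc]
  rw [reassoc_of% h]
  simp

theorem mapEvaluation_mapCoevaluation :
    F.mapCoevaluation X Y ▷ F.obj X ≫ (α_ _ _ _).hom ≫ F.obj X ◁ F.mapEvaluation X Y =
      (λ_ (F.obj X)).hom ≫ (ρ_ (F.obj X)).inv := by
  have h := F.congr_map (ExactPairing.evaluation_coevaluation X Y)
  simp only [Functor.map_comp, Monoidal.map_whiskerLeft, Monoidal.map_whiskerRight,
    Monoidal.map_associator, Monoidal.map_leftUnitor, Monoidal.map_rightUnitor_inv,
    Category.assoc, Monoidal.μ_δ_assoc, cancel_epi] at h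
  simp only [← Category.assoc, cancel_mono] at h
  simp only [Category.assoc] at h
  simp only [mapCoevaluation, mapEvaluation, MonoidalCategory.whiskerLeft_comp,
    MonoidalCategory.comp_whiskerRight, Category.assoc]
  rw [reassoc_of% h]
  simp

abbrev mapExactPairing : ExactPairing (F.obj X) (F.obj Y) where
  coevaluation' := F.mapCoevaluation X Y
  evaluation' := F.mapEvaluation X Y
  coevaluation_evaluation' := F.mapCoevaluation_mapEvaluation X Y
  evaluation_coevaluation' := F.mapEvaluation_mapCoevaluation X Y

end Functor

namespace NatTrans.IsMonoidal

variable {F G : C ⥤ D} [F.Monoidal] [G.Monoidal] (θ : F ⟶ G) [IsMonoidal θ]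

theorem app_unit_comp_η : θ.app (𝟙_ C) ≫ η G = η F := by
  rw [← cancel_epi (ε F), unit_assoc, Functor.Monoidal.ε_η, Functor.Monoidal.ε_η]

theorem δ_comp_tensorHom_app (X Y : C) :
    δ F X Y ≫ (θ.app X ⊗ₘ θ.app Y) = θ.app (X ⊗ Y) ≫ δ G X Y := by
  rw [← cancel_mono (μ G X Y), Category.assoc, Category.assoc, ← tensor,
    Functor.Monoidal.δ_μ_assoc, Functor.Monoidal.δ_μ, Category.comp_id]

section ExactPairing

variable (X Y : C) [ExactPairing X Y]

theorem mapCoevaluation_comp_tensorHom :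
    F.mapCoevaluation X Y ≫ (θ.app X ⊗ₘ θ.app Y) = G.mapCoevaluation X Y := by
  rw [Functor.mapCoevaluation, Functor.mapCoevaluation, Category.assoc, Category.assoc,
    δ_comp_tensorHom_app, θ.naturality_assoc, unit_assoc]

theorem tensorHom_comp_mapEvaluation :
    (θ.app Y ⊗ₘ θ.app X) ≫ G.mapEvaluation X Y = F.mapEvaluation X Y := by
  rw [Functor.mapEvaluation, Functor.mapEvaluation, ← tensor_assoc, ← θ.naturality_assoc,
    app_unit_comp_η]

attribute [local instance] Functor.mapExactPairing

theorem app_comp_pairingMate : θ.app Y ≫ pairingMate (θ.app X) = 𝟙 _ :=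
  comp_pairingMate_eq_id (tensorHom_comp_mapEvaluation θ X Y)

theorem pairingMate_comp_app : pairingMate (θ.app X) ≫ θ.app Y = 𝟙 _ :=
  pairingMate_comp_eq_id (mapCoevaluation_comp_tensorHom θ X Y)

end ExactPairing

theorem isIso_app_of_exactPairing (X Y : C) [ExactPairing X Y] : IsIso (θ.app Y) :=
  ⟨_, app_comp_pairingMate θ X Y, pairingMate_comp_app θ X Y⟩

theorem isIso_app [LeftRigidCategory C] (B : C) : IsIso (θ.app B) :=
  isIso_app_of_exactPairing θ (ᘁB) B

end NatTrans.IsMonoidal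

end CategoryTheory

/-- (Saavedra Rivano) Let `θ : F ⟶ G` be a monoidal natural transformation between strong
monoidal functors `F, G : C ⥤ D`, and suppose `A` has a right dual `Aᘁ` in `C`.  Transport
the duality data along `F` and `G`, and let `m : G(Aᘁ) ⟶ F(Aᘁ)` be the adjoint mate of
`θ_A` with respect to the transported pairings.  Then `θ_{Aᘁ}` is invertible with inverse
`m`.  In particular, if `C` is autonomous (rigid), every monoidal natural transformation
between strong monoidal functors out of `C` has all components invertible. -/
theorem saavedra_rivano {C D : Type*} [Category C] [Category D]
    [MonoidalCategory C] [MonoidalCategory D]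
    (F G : C ⥤ D) [F.Monoidal] [G.Monoidal] (θ : F ⟶ G) [NatTrans.IsMonoidal θ]
    (A : C) [HasRightDual A] :
    (let coevF : 𝟙_ D ⟶ F.obj A ⊗ F.obj (Aᘁ) :=
        Functor.LaxMonoidal.ε F ≫ F.map (η_ A (Aᘁ)) ≫ Functor.OplaxMonoidal.δ F A (Aᘁ);
      let evG : G.obj (Aᘁ) ⊗ G.obj A ⟶ 𝟙_ D :=
        Functor.LaxMonoidal.μ G (Aᘁ) A ≫ G.map (ε_ A (Aᘁ)) ≫ Functor.OplaxMonoidal.η G;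
      let m : G.obj (Aᘁ) ⟶ F.obj (Aᘁ) :=
        (ρ_ (G.obj (Aᘁ))).inv ≫ (G.obj (Aᘁ) ◁ coevF) ≫
          (G.obj (Aᘁ) ◁ (θ.app A ▷ F.obj (Aᘁ))) ≫ (α_ _ _ _).inv ≫
          (evG ▷ F.obj (Aᘁ)) ≫ (λ_ _).hom;
      θ.app (Aᘁ) ≫ m = 𝟙 _ ∧ m ≫ θ.app (Aᘁ) = 𝟙 _) ∧
    (∀ (_ : RigidCategory C) (B : C), IsIso (θ.app B)) :=
  ⟨⟨NatTrans.IsMonoidal.app_comp_pairingMate θ A (Aᘁ),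
      NatTrans.IsMonoidal.pairingMate_comp_app θ A (Aᘁ)⟩,
    fun _ B => NatTrans.IsMonoidal.isIso_app θ B⟩
end

section
/- In a tortile category whose braiding is a symmetry, the twist satisfies θ_A² = id_A for every object A. -/
/-!
Naturality of `θ` at the coevaluation `η_A : I ⟶ A ⊗ A*`, together with `θ_I = id`, gives
`η_A ≫ θ_{A ⊗ A*} = η_A`. Under a symmetry the braidings in `θ_{A ⊗ A*}` cancel, leaving
`θ_A ⊗ θ_{A*} = θ_A ⊗ (θ_A)*`; sliding the mate `(θ_A)*` across `η_A` turns the identity into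
`η_A ≫ (θ_A ≫ θ_A) ▷ A* = η_A`, and whiskered coevaluation is injective by the zig-zag law.
-/

open CategoryTheory MonoidalCategory

variable (C : Type*) [Category C] [MonoidalCategory C]

section
variable [BraidedCategory C]

/-- A twist on a braided monoidal category: a natural isomorphism `θ_A : A ≅ A` with
`θ_I = id` and `θ_{A⊗B} = σ_{B,A} ∘ (θ_B ⊗ θ_A) ∘ σ_{A,B}`. -/
structure Twist where
  app : ∀ A : C, A ≅ A
  natural : ∀ {A B : C} (f : A ⟶ B), f ≫ (app B).hom = (app A).hom ≫ f
  unit : (app (𝟙_ C)).hom = 𝟙 (𝟙_ C)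
  compat : ∀ A B : C,
    (app (A ⊗ B)).hom = (β_ A B).hom ≫ ((app B).hom ⊗ₘ (app A).hom) ≫ (β_ B A).hom

end

section

variable {C}

theorem coevaluation_comp_tensorHom_rightAdjointMate {X Y Z : C} [HasRightDual X]
    [HasRightDual Y] (f : X ⟶ Y) (g : Y ⟶ Z) :
    η_ Y Yᘁ ≫ (g ⊗ₘ fᘁ) = η_ X Xᘁ ≫ (f ≫ g) ▷ Xᘁ := by
  rw [tensorHom_def', coevaluation_comp_rightAdjointMate_assoc, comp_whiskerRight]

theorem eq_of_coevaluation_comp_whiskerRight_eq {X Y : C} [HasRightDual X] {f g : X ⟶ Y}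
    (h : η_ X Xᘁ ≫ f ▷ Xᘁ = η_ X Xᘁ ≫ g ▷ Xᘁ) : f = g := by
  have h' := congrArg (tensorRightHomEquiv (𝟙_ C) X Xᘁ Y).symm h
  rw [tensorRightHomEquiv_symm_coevaluation_comp_whiskerRight,
    tensorRightHomEquiv_symm_coevaluation_comp_whiskerRight] at h'
  exact (cancel_epi (λ_ X).hom).mp h'

namespace Twist

theorem coevaluation_comp_app_hom [BraidedCategory C] (θ : Twist C) (X : C) [HasRightDual X] :
    η_ X Xᘁ ≫ (θ.app (X ⊗ Xᘁ)).hom = η_ X Xᘁ := by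
  rw [θ.natural, θ.unit, Category.id_comp]

theorem app_tensor_hom [SymmetricCategory C] (θ : Twist C) (X Y : C) :
    (θ.app (X ⊗ Y)).hom = (θ.app X).hom ⊗ₘ (θ.app Y).hom := by
  rw [θ.compat, ← BraidedCategory.braiding_naturality_assoc, SymmetricCategory.symmetry,
    Category.comp_id]

end Twist

end

/-- In a tortile (ribbon) category whose braiding is a symmetry, the twist squares to the
identity: `θ_A² = id_A` for every object `A`.  Tortile means balanced autonomous with
`θ_{A*} = (θ_A)*`. -/
theorem tortile_symmetric_twist_squared [SymmetricCategory C] [RightRigidCategory C]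
    (θ : Twist C) (tortile : ∀ A : C, (θ.app ((Aᘁ : C))).hom = ((θ.app A).hom)ᘁ)
    (A : C) : (θ.app A).hom ≫ (θ.app A).hom = 𝟙 A := by
  have h := θ.coevaluation_comp_app_hom A
  rw [θ.app_tensor_hom, tortile, coevaluation_comp_tensorHom_rightAdjointMate] at h
  apply eq_of_coevaluation_comp_whiskerRight_eq
  rwa [id_whiskerRight, Category.comp_id]
end

section
/- The category Rel of sets and relations, with tensor given by disjoint union, is a symmetric traced category: for a relation R ⊆ (A + X) × (B + X), defining Tr^X(R) = {(a,b) : ∃ n ≥ 0, ∃ x₁,…,xₙ ∈ X with a R x₁ R x₂ R … R xₙ R b} yields an operation satisfying tightening (naturality in A and B), sliding (dinaturality in X), vanishing (Tr^∅ R = R and Tr^{X+Y} R = Tr^X(Tr^Y R)), strength (Tr^X(S + R) = S + Tr^X R), and yanking (Tr^X of the symmetry on X + X is the identity on X). -/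
/-- Morphisms of the category `Rel`: relations between sets. -/
def Rl (A B : Type) := A → B → Prop

/-- Composition of relations. -/
def rcomp {A B C : Type} (R : Rl A B) (S : Rl B C) : Rl A C :=
  fun a c => ∃ b, R a b ∧ S b c

/-- Identity relation. -/
def idRl (A : Type) : Rl A A := fun a b => a = b

/-- Tensor product of relations: disjoint union. -/
def sumRl {A B C D : Type} (R : Rl A B) (S : Rl C D) : Rl (A ⊕ C) (B ⊕ D) :=
  fun x y => match x, y with
  | Sum.inl a, Sum.inl b => R a b
  | Sum.inr c, Sum.inr d => S c d
  | _, _ => False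

/-- The symmetry `A ⊕ B → B ⊕ A` as a relation. -/
def swapRl (A B : Type) : Rl (A ⊕ B) (B ⊕ A) :=
  fun x y => match x, y with
  | Sum.inl a, Sum.inr a' => a = a'
  | Sum.inr b, Sum.inl b' => b = b'
  | _, _ => False

/-- The trace of `R ⊆ (A + X) × (B + X)`:
`Tr^X(R) = {(a,b) : ∃ n ≥ 0, ∃ x₁,…,xₙ ∈ X, a R x₁ R x₂ R … R xₙ R b}`. -/
def trRl {A B X : Type} (R : Rl (A ⊕ X) (B ⊕ X)) : Rl A B :=
  fun a b => R (.inl a) (.inl b) ∨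
    ∃ x y, R (.inl a) (.inr x) ∧
      Relation.ReflTransGen (fun u v => R (.inr u) (.inr v)) x y ∧ R (.inr y) (.inl b)

/-- Conjugation by the associativity isomorphism of disjoint union. -/
def reassocRl {A X Y B X' Y' : Type} (R : Rl (A ⊕ (X ⊕ Y)) (B ⊕ (X' ⊕ Y'))) :
    Rl ((A ⊕ X) ⊕ Y) ((B ⊕ X') ⊕ Y') :=
  fun u v => R (Equiv.sumAssoc A X Y u) (Equiv.sumAssoc B X' Y' v)

/-!
Tightening and strength only touch the first and last step of a path `a R x₁ R … R xₙ R b`, and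
the symmetry has no steps inside `X`, which gives yanking. Sliding moves `g` along such a path by
the rolling rule `(p ; q)* ; p = p ; (q ; p)*`. For vanishing, a path through `X + Y` is cut at
its visits to `X`: each maximal excursion into `Y` between two visits is one step of `Tr^Y`, so
the star of a relation on `X + Y` is given by Bekič's block formula `blockStar`.
-/

open Relation

section Basic
variable {A B C D E X Y : Type}

@[ext] lemma Rl.ext {R S : Rl A B} (h : ∀ a b, R a b ↔ S a b) : R = S :=
  funext fun a => funext fun b => propext (h a b)

@[simp] lemma idRl_apply (a b : A) : idRl A a b ↔ a = b := Iff.rfl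

@[simp] lemma sumRl_inl_inl (R : Rl A B) (S : Rl C D) (a : A) (b : B) :
    sumRl R S (.inl a) (.inl b) ↔ R a b := Iff.rfl

@[simp] lemma sumRl_inr_inr (R : Rl A B) (S : Rl C D) (c : C) (d : D) :
    sumRl R S (.inr c) (.inr d) ↔ S c d := Iff.rfl

@[simp] lemma sumRl_inl_inr (R : Rl A B) (S : Rl C D) (a : A) (d : D) :
    ¬ sumRl R S (.inl a) (.inr d) := id

@[simp] lemma sumRl_inr_inl (R : Rl A B) (S : Rl C D) (c : C) (b : B) :
    ¬ sumRl R S (.inr c) (.inl b) := id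

lemma idRl_rcomp (R : Rl A B) : rcomp (idRl A) R = R := by
  ext a b
  simp [rcomp]

lemma rcomp_idRl (R : Rl A B) : rcomp R (idRl B) = R := by
  ext a b
  simp [rcomp]

lemma sumRl_rcomp_apply_inl (R : Rl A B) (S : Rl C D) (T : Rl (B ⊕ D) E) (a : A) (e : E) :
    rcomp (sumRl R S) T (.inl a) e ↔ ∃ b, R a b ∧ T (.inl b) e := by
  simp [rcomp, Sum.exists]

lemma sumRl_rcomp_apply_inr (R : Rl A B) (S : Rl C D) (T : Rl (B ⊕ D) E) (c : C) (e : E) :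
    rcomp (sumRl R S) T (.inr c) e ↔ ∃ d, S c d ∧ T (.inr d) e := by
  simp [rcomp, Sum.exists]

lemma rcomp_sumRl_apply_inl (T : Rl E (A ⊕ C)) (R : Rl A B) (S : Rl C D) (e : E) (b : B) :
    rcomp T (sumRl R S) e (.inl b) ↔ ∃ a, T e (.inl a) ∧ R a b := by
  simp [rcomp, Sum.exists]

lemma rcomp_sumRl_apply_inr (T : Rl E (A ⊕ C)) (R : Rl A B) (S : Rl C D) (e : E) (d : D) :
    rcomp T (sumRl R S) e (.inr d) ↔ ∃ c, T e (.inr c) ∧ S c d := by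
  simp [rcomp, Sum.exists]

abbrev inrRl (R : Rl (A ⊕ X) (B ⊕ Y)) : Rl X Y := fun x y => R (.inr x) (.inr y)

lemma inrRl_sumRl_rcomp (R : Rl A B) (S : Rl X Y) (T : Rl (B ⊕ Y) (C ⊕ D)) :
    inrRl (rcomp (sumRl R S) T) = rcomp S (inrRl T) := by
  ext x d
  exact sumRl_rcomp_apply_inr R S T x (.inr d)

lemma inrRl_rcomp_sumRl (T : Rl (C ⊕ D) (A ⊕ X)) (R : Rl A B) (S : Rl X Y) :
    inrRl (rcomp T (sumRl R S)) = rcomp (inrRl T) S := by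
  ext d y
  exact rcomp_sumRl_apply_inr T R S (.inr d) y

lemma trRl_iff (R : Rl (A ⊕ X) (B ⊕ X)) (a : A) (b : B) :
    trRl R a b ↔ R (.inl a) (.inl b) ∨
      ∃ x y, R (.inl a) (.inr x) ∧ ReflTransGen (inrRl R) x y ∧ R (.inr y) (.inl b) := Iff.rfl

end Basic

lemma rcomp_reflTransGen_rolling {α β : Type} (p : Rl α β) (q : Rl β α) :
    rcomp (ReflTransGen (rcomp p q)) p = rcomp p (ReflTransGen (rcomp q p)) := by
  ext a b
  constructor
  · rintro ⟨a', h, hp⟩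
    induction h using ReflTransGen.head_induction_on with
    | refl => exact ⟨b, hp, .refl⟩
    | head hpq _ ih =>
      obtain ⟨b₁, hp₁, hq₁⟩ := hpq
      obtain ⟨b₂, hp₂, h₂⟩ := ih
      exact ⟨b₁, hp₁, h₂.head ⟨_, hq₁, hp₂⟩⟩
  · rintro ⟨b', hp, h⟩
    induction h with
    | refl => exact ⟨a, .refl, hp⟩
    | tail _ hqp ih =>
      obtain ⟨a', h₁, hp₁⟩ := ih
      obtain ⟨a₂, hq₂, hp₂⟩ := hqp
      exact ⟨a₂, h₁.tail ⟨_, hp₁, hq₂⟩, hp₂⟩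

section Naturality
variable {A A' B B' X Y : Type}

lemma trRl_sumRl_idRl_rcomp (h : Rl A' A) (R : Rl (A ⊕ X) (B ⊕ X)) :
    trRl (rcomp (sumRl h (idRl X)) R) = rcomp h (trRl R) := by
  ext a b
  simp only [trRl_iff, inrRl_sumRl_rcomp, idRl_rcomp, sumRl_rcomp_apply_inl,
    sumRl_rcomp_apply_inr, idRl_apply, exists_eq_left']
  simp only [rcomp, trRl_iff]
  grind

lemma trRl_rcomp_sumRl_idRl (R : Rl (A ⊕ X) (B ⊕ X)) (g : Rl B B') :
    trRl (rcomp R (sumRl g (idRl X))) = rcomp (trRl R) g := by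
  ext a b
  simp only [trRl_iff, inrRl_rcomp_sumRl, rcomp_idRl, rcomp_sumRl_apply_inl,
    rcomp_sumRl_apply_inr, idRl_apply, exists_eq_right]
  simp only [rcomp, trRl_iff]
  grind

lemma trRl_idRl_sumRl_rcomp_comm (R : Rl (A ⊕ X) (B ⊕ Y)) (g : Rl Y X) :
    trRl (rcomp (sumRl (idRl A) g) R) = trRl (rcomp R (sumRl (idRl B) g)) := by
  ext a b
  simp only [trRl_iff, inrRl_sumRl_rcomp, inrRl_rcomp_sumRl, sumRl_rcomp_apply_inl,
    sumRl_rcomp_apply_inr, rcomp_sumRl_apply_inl, rcomp_sumRl_apply_inr, idRl_apply,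
    exists_eq_left', exists_eq_right]
  have rolling := congrFun₂ (rcomp_reflTransGen_rolling g (inrRl R))
  refine or_congr_right ⟨?_, ?_⟩
  · rintro ⟨x, y, hx, hxy, d, hyd, hd⟩
    obtain ⟨c, hxc, hcd⟩ := (rolling x d).mp ⟨y, hxy, hyd⟩
    exact ⟨c, d, ⟨x, hx, hxc⟩, hcd, hd⟩
  · rintro ⟨c, d, ⟨x, hx, hxc⟩, hcd, hd⟩
    obtain ⟨y, hxy, hyd⟩ := (rolling x d).mpr ⟨c, hxc, hcd⟩
    exact ⟨x, y, hx, hxy, d, hyd, hd⟩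

end Naturality

section BlockStar
variable {X Y : Type} (r : Rl (X ⊕ Y) (X ⊕ Y))

/-- `trRl r` plays the role of the Schur complement `r_XX ∪ r_XY ; r_YY* ; r_YX`. -/
def blockStar : Rl (X ⊕ Y) (X ⊕ Y)
  | .inl x, .inl x' => ReflTransGen (trRl r) x x'
  | .inl x, .inr y => ∃ x' y', ReflTransGen (trRl r) x x' ∧ r (.inl x') (.inr y') ∧
      ReflTransGen (inrRl r) y' y
  | .inr y, .inl x => ∃ y' x', ReflTransGen (inrRl r) y y' ∧ r (.inr y') (.inl x') ∧
      ReflTransGen (trRl r) x' x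
  | .inr y, .inr y' => ReflTransGen (inrRl r) y y' ∨
      ∃ y₁ x₁ x₂ y₂, ReflTransGen (inrRl r) y y₁ ∧ r (.inr y₁) (.inl x₁) ∧
        ReflTransGen (trRl r) x₁ x₂ ∧ r (.inl x₂) (.inr y₂) ∧ ReflTransGen (inrRl r) y₂ y'

variable {r}

lemma Relation.ReflTransGen.inr_of_inrRl {y y' : Y} (h : ReflTransGen (inrRl r) y y') :
    ReflTransGen r (.inr y) (.inr y') :=
  h.lift Sum.inr fun _ _ => id

lemma Relation.ReflTransGen.inl_of_trRl {x x' : X} (h : ReflTransGen (trRl r) x x') :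
    ReflTransGen r (.inl x) (.inl x') := by
  refine h.lift' Sum.inl fun x x' hx => ?_
  rcases hx with hx | ⟨y, y', hy, hyy', hy'⟩
  · exact .single hx
  · exact ((ReflTransGen.single hy).trans hyy'.inr_of_inrRl).tail hy'

lemma reflTransGen_of_blockStar {u v : X ⊕ Y} (h : blockStar r u v) : ReflTransGen r u v := by
  rcases u with x | y <;> rcases v with x' | y'
  · exact ReflTransGen.inl_of_trRl h
  · obtain ⟨x₁, y₁, h₁, h₂, h₃⟩ := h
    exact (h₁.inl_of_trRl.tail h₂).trans h₃.inr_of_inrRl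
  · obtain ⟨y₁, x₁, h₁, h₂, h₃⟩ := h
    exact (h₁.inr_of_inrRl.tail h₂).trans h₃.inl_of_trRl
  · rcases h with h | ⟨y₁, x₁, x₂, y₂, h₁, h₂, h₃, h₄, h₅⟩
    · exact h.inr_of_inrRl
    · exact (((h₁.inr_of_inrRl.tail h₂).trans h₃.inl_of_trRl).tail h₄).trans h₅.inr_of_inrRl

lemma blockStar_refl (u : X ⊕ Y) : blockStar r u u := by
  cases u
  · exact ReflTransGen.refl
  · exact Or.inl ReflTransGen.refl

lemma blockStar_head {u w v : X ⊕ Y} (huw : r u w) (hwv : blockStar r w v) :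
    blockStar r u v := by
  rcases u with x | y <;> rcases w with x₀ | y₀ <;> rcases v with x' | y'
  · exact ReflTransGen.head (Or.inl huw) (hwv : ReflTransGen _ _ _)
  · obtain ⟨x₁, y₁, h₁, h₂, h₃⟩ := hwv
    exact ⟨x₁, y₁, h₁.head (Or.inl huw), h₂, h₃⟩
  · obtain ⟨y₁, x₁, h₁, h₂, h₃⟩ := hwv
    exact h₃.head (Or.inr ⟨y₀, y₁, huw, h₁, h₂⟩)
  · rcases hwv with h | ⟨y₁, x₁, x₂, y₂, h₁, h₂, h₃, h₄, h₅⟩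
    · exact ⟨x, y₀, .refl, huw, h⟩
    · exact ⟨x₂, y₂, h₃.head (Or.inr ⟨y₀, y₁, huw, h₁, h₂⟩), h₄, h₅⟩
  · exact ⟨y, x₀, .refl, huw, hwv⟩
  · obtain ⟨x₁, y₁, h₁, h₂, h₃⟩ := hwv
    exact Or.inr ⟨y, x₀, x₁, y₁, .refl, huw, h₁, h₂, h₃⟩
  · obtain ⟨y₁, x₁, h₁, h₂, h₃⟩ := hwv
    exact ⟨y₁, x₁, h₁.head huw, h₂, h₃⟩
  · rcases hwv with h | ⟨y₁, x₁, x₂, y₂, h₁, h₂, h₃, h₄, h₅⟩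
    · exact Or.inl (h.head huw)
    · exact Or.inr ⟨y₁, x₁, x₂, y₂, h₁.head huw, h₂, h₃, h₄, h₅⟩

lemma blockStar_of_reflTransGen {u v : X ⊕ Y} (h : ReflTransGen r u v) : blockStar r u v := by
  induction h using ReflTransGen.head_induction_on with
  | refl => exact blockStar_refl v
  | head huw _ ih => exact blockStar_head huw ih

end BlockStar

lemma trRl_trRl_reassocRl {A B X Y : Type} (R : Rl (A ⊕ (X ⊕ Y)) (B ⊕ (X ⊕ Y))) :
    trRl (trRl (reassocRl R)) = trRl R := by
  ext a b
  constructor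
  · rintro ((h | ⟨y, y', hy, hyy', hy'⟩) | ⟨x, x', hx, hxx', hx'⟩)
    · exact Or.inl h
    · exact Or.inr ⟨.inr y, .inr y', hy, hyy'.inr_of_inrRl, hy'⟩
    rcases hx with hx | ⟨y, y₁, hy, hyy₁, hy₁⟩ <;>
      rcases hx' with hx' | ⟨y₂, y', hy₂, hyy', hy'⟩
    · exact Or.inr ⟨.inl x, .inl x', hx, reflTransGen_of_blockStar hxx', hx'⟩
    · exact Or.inr ⟨.inl x, .inr y', hx,
        reflTransGen_of_blockStar (r := inrRl R) ⟨x', y₂, hxx', hy₂, hyy'⟩, hy'⟩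
    · exact Or.inr ⟨.inr y, .inl x', hy,
        reflTransGen_of_blockStar (r := inrRl R) ⟨y₁, x, hyy₁, hy₁, hxx'⟩, hx'⟩
    · exact Or.inr ⟨.inr y, .inr y', hy, reflTransGen_of_blockStar (r := inrRl R)
        (Or.inr ⟨y₁, x, x', y₂, hyy₁, hy₁, hxx', hy₂, hyy'⟩), hy'⟩
  · rintro (h | ⟨z, w, hz, hzw, hw⟩)
    · exact Or.inl (Or.inl h)
    replace hzw := blockStar_of_reflTransGen (r := inrRl R) hzw
    rcases z with x | y <;> rcases w with x' | y'
    · exact Or.inr ⟨x, x', Or.inl hz, hzw, Or.inl hw⟩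
    · obtain ⟨x₁, y₁, h₁, h₂, h₃⟩ := hzw
      exact Or.inr ⟨x, x₁, Or.inl hz, h₁, Or.inr ⟨y₁, y', h₂, h₃, hw⟩⟩
    · obtain ⟨y₁, x₁, h₁, h₂, h₃⟩ := hzw
      exact Or.inr ⟨x₁, x', Or.inr ⟨y, y₁, hz, h₁, h₂⟩, h₃, Or.inl hw⟩
    · rcases hzw with h | ⟨y₁, x₁, x₂, y₂, h₁, h₂, h₃, h₄, h₅⟩
      · exact Or.inl (Or.inr ⟨y, y', hz, h, hw⟩)
      · exact Or.inr ⟨x₁, x₂, Or.inr ⟨y, y₁, hz, h₁, h₂⟩, h₃, Or.inr ⟨y₂, y', h₄, h₅, hw⟩⟩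

lemma trRl_of_isEmpty {A B X : Type} [IsEmpty X] (R : Rl (A ⊕ X) (B ⊕ X)) (a : A) (b : B) :
    trRl R a b ↔ R (.inl a) (.inl b) :=
  or_iff_left fun ⟨x, _⟩ => isEmptyElim x

lemma trRl_reassocRl_sumRl {A B C D X : Type} (S : Rl C D) (R : Rl (A ⊕ X) (B ⊕ X)) :
    trRl (reassocRl (sumRl S R)) = sumRl S (trRl R) := by
  ext (c | a) (d | b)
  case inr.inr => exact Iff.rfl
  all_goals simp [trRl_iff, reassocRl]

lemma trRl_swapRl (X : Type) : trRl (swapRl X X) = idRl X := by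
  have no_inner_path (x y : X) : ReflTransGen (inrRl (swapRl X X)) x y ↔ y = x :=
    reflTransGen_iff_eq fun _ => id
  ext x y
  simp [trRl_iff, swapRl, no_inner_path]

/-- `Rel` with disjoint union and the iterative trace is a symmetric traced category:
the trace satisfies tightening, sliding, vanishing, strength, and yanking. -/
theorem rel_symmetric_traced :
    -- tightening (naturality in `A` and `B`)
    (∀ {A A' B B' X : Type} (R : Rl (A ⊕ X) (B ⊕ X)) (g : Rl B B') (h : Rl A' A),
      trRl (rcomp (sumRl h (idRl X)) (rcomp R (sumRl g (idRl X)))) =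
        rcomp h (rcomp (trRl R) g)) ∧
    -- sliding (dinaturality in `X`)
    (∀ {A B X Y : Type} (R : Rl (A ⊕ X) (B ⊕ Y)) (g : Rl Y X),
      trRl (rcomp (sumRl (idRl A) g) R) = trRl (rcomp R (sumRl (idRl B) g))) ∧
    -- vanishing, unit case: `Tr^∅ R = R`
    (∀ {A B : Type} (R : Rl (A ⊕ Empty) (B ⊕ Empty)) (a : A) (b : B),
      trRl R a b ↔ R (.inl a) (.inl b)) ∧
    -- vanishing, tensor case: `Tr^{X+Y} R = Tr^X (Tr^Y R)`
    (∀ {A B X Y : Type} (R : Rl (A ⊕ (X ⊕ Y)) (B ⊕ (X ⊕ Y))),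
      trRl R = trRl (trRl (reassocRl R))) ∧
    -- strength (superposing): `Tr^X (S + R) = S + Tr^X R`
    (∀ {A B C D X : Type} (S : Rl C D) (R : Rl (A ⊕ X) (B ⊕ X)),
      trRl (reassocRl (sumRl S R)) = sumRl S (trRl R)) ∧
    -- yanking: the trace of the symmetry on `X + X` is the identity on `X`
    (∀ X : Type, trRl (swapRl X X) = idRl X) :=
  ⟨fun R g h => by rw [trRl_sumRl_idRl_rcomp, trRl_rcomp_sumRl_idRl],
    @trRl_idRl_sumRl_rcomp_comm, fun R => trRl_of_isEmpty R, fun R => (trRl_trRl_reassocRl R).symm,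
    @trRl_reassocRl_sumRl, trRl_swapRl⟩
end

section
/- (Căzănescu–Ştefănescu) In a category with finite coproducts, a trace (for the coproduct monoidal structure) determines an iteration operator and vice versa: given a symmetric trace Tr, the operation iter^X(f) = Tr^X(f') for f : X → A + X, where f' is f precomposed with the codiagonal, satisfies the iteration equation iter(f) = [id_A, iter(f)] ∘ f and the diagonal property iter(iter(f)) = iter((id_A + ∇_X) ∘ f) for f : X → (A + X) + X; conversely, an iteration operator satisfying these axioms, together with naturality in A and dinaturality in X, determines a trace. -/
open CategoryTheory Limits

variable (C : Type*) [Category C] [HasBinaryCoproducts C] [HasInitial C]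

/-- A symmetric trace on a category with finite coproducts (for the coproduct monoidal
structure): operations `Tr^X : Hom(A + X, B + X) → Hom(A, B)` satisfying tightening,
sliding, vanishing, strength (superposing), and yanking. -/
structure CoprodTrace where
  tr : ∀ {A B X : C}, (A ⨿ X ⟶ B ⨿ X) → (A ⟶ B)
  tightening : ∀ {A A' B B' X : C} (f : A ⨿ X ⟶ B ⨿ X) (g : B ⟶ B') (h : A' ⟶ A),
    tr (coprod.map h (𝟙 X) ≫ f ≫ coprod.map g (𝟙 X)) = h ≫ tr f ≫ g
  sliding : ∀ {A B X Y : C} (f : A ⨿ X ⟶ B ⨿ Y) (g : Y ⟶ X),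
    tr (coprod.map (𝟙 A) g ≫ f) = tr (f ≫ coprod.map (𝟙 B) g)
  vanishing_zero : ∀ {A B : C} (f : A ⨿ (⊥_ C) ⟶ B ⨿ (⊥_ C)),
    tr f = coprod.inl ≫ f ≫ coprod.desc (𝟙 B) (initial.to B)
  vanishing_tensor : ∀ {A B X Y : C} (f : A ⨿ (X ⨿ Y) ⟶ B ⨿ (X ⨿ Y)),
    tr f = tr (X := X)
      (tr (X := Y) ((coprod.associator A X Y).hom ≫ f ≫ (coprod.associator B X Y).inv))
  strength : ∀ {U V A B X : C} (g : U ⟶ V) (f : A ⨿ X ⟶ B ⨿ X),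
    tr ((coprod.associator U A X).hom ≫ coprod.map g f ≫ (coprod.associator V B X).inv) =
      coprod.map g (tr f)
  yanking : ∀ X : C, tr ((coprod.braiding X X).hom) = 𝟙 X

/-- An iteration operator: `iter^X : Hom(X, A + X) → Hom(X, A)`, natural in `A`,
dinatural in `X`, satisfying the iteration equation and the diagonal property. -/
structure IterationOp where
  iter : ∀ {A X : C}, (X ⟶ A ⨿ X) → (X ⟶ A)
  natural : ∀ {A B X : C} (f : X ⟶ A ⨿ X) (g : A ⟶ B),
    iter (f ≫ coprod.map g (𝟙 X)) = iter f ≫ g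
  dinatural : ∀ {A X Y : C} (f : X ⟶ A ⨿ Y) (g : Y ⟶ X),
    g ≫ iter (f ≫ coprod.map (𝟙 A) g) = iter (g ≫ f)
  iteration : ∀ {A X : C} (f : X ⟶ A ⨿ X), iter f = f ≫ coprod.desc (𝟙 A) (iter f)
  diagonal : ∀ {A X : C} (f : X ⟶ (A ⨿ X) ⨿ X),
    iter (iter f) = iter (f ≫ (coprod.associator A X X).hom ≫
      coprod.map (𝟙 A) (coprod.desc (𝟙 X) (𝟙 X)))

section Aux

set_option linter.unusedSectionVars false

attribute [local simp] coprod.inl_desc coprod.inr_desc coprod.inl_desc_assoc coprod.inr_desc_assoc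

variable {C}

private lemma coprod_map_eq {A B X Y : C} (u : A ⟶ B) (v : X ⟶ Y) :
    coprod.map u v = coprod.desc (u ≫ coprod.inl) (v ≫ coprod.inr) := by
  ext <;> simp

private lemma coprod_desc_eta {X Y Z : C} (g : X ⨿ Y ⟶ Z) :
    coprod.desc (coprod.inl ≫ g) (coprod.inr ≫ g) = g := by
  ext <;> simp

namespace CoprodTrace

variable (T : CoprodTrace C)

lemma tr_pre {A A' B X : C} (f : A ⨿ X ⟶ B ⨿ X) (h : A' ⟶ A) :
    T.tr (coprod.map h (𝟙 X) ≫ f) = h ≫ T.tr f := by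
  simpa using T.tightening f (𝟙 B) h

lemma tr_post {A B B' X : C} (f : A ⨿ X ⟶ B ⨿ X) (g : B ⟶ B') :
    T.tr (f ≫ coprod.map g (𝟙 X)) = T.tr f ≫ g := by
  simpa using T.tightening f g (𝟙 A)

/-- The key "strength" computation: the trace of `[𝟙, f]` is `[𝟙, Tr [inr, f]]`. -/
lemma s_eq {A X : C} (f : X ⟶ A ⨿ X) :
    T.tr (coprod.desc (𝟙 (A ⨿ X)) f) =
      coprod.desc (𝟙 A) (T.tr (coprod.desc coprod.inr f)) := by
  have hE : ((coprod.associator A X X).hom ≫ coprod.map (𝟙 A) (coprod.desc coprod.inr f) ≫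
      (coprod.associator A A X).inv) ≫ coprod.map (coprod.desc (𝟙 A) (𝟙 A)) (𝟙 X) =
      coprod.desc (𝟙 (A ⨿ X)) f := by
    ext <;> simp
  have h1 := T.tr_post ((coprod.associator A X X).hom ≫
      coprod.map (𝟙 A) (coprod.desc coprod.inr f) ≫ (coprod.associator A A X).inv)
      (coprod.desc (𝟙 A) (𝟙 A))
  rw [hE] at h1
  rw [h1, T.strength]
  ext <;> simp

/-- Generalized yanking. -/
lemma gy {A B X : C} (h : A ⟶ X) (g : X ⟶ B) :
    T.tr (coprod.desc (h ≫ coprod.inr) (g ≫ coprod.inl)) = h ≫ g := by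
  have h1 := T.tightening (coprod.braiding X X).hom g h
  have hE : coprod.map h (𝟙 X) ≫ (coprod.braiding X X).hom ≫ coprod.map g (𝟙 X) =
      coprod.desc (h ≫ coprod.inr) (g ≫ coprod.inl) := by
    ext <;> simp
  rw [hE, T.yanking] at h1
  simpa using h1

lemma unroll {A X : C} (f : X ⟶ A ⨿ X) :
    T.tr (coprod.desc f f) =
      f ≫ coprod.desc (𝟙 A) (T.tr (coprod.desc coprod.inr f)) := by
  have hE : coprod.map f (𝟙 X) ≫ coprod.desc (𝟙 (A ⨿ X)) f = coprod.desc f f := by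
    ext <;> simp
  rw [← hE, T.tr_pre, T.s_eq]

lemma fix_aux {A X : C} (f : X ⟶ A ⨿ X) :
    T.tr (coprod.desc coprod.inr f) = T.tr (coprod.desc f f) := by
  have hslide := T.sliding
    (coprod.desc (coprod.inl ≫ coprod.inr) (f ≫ coprod.map (𝟙 A) coprod.inr))
    (coprod.desc (𝟙 X) (𝟙 X))
  have h2 : coprod.desc (coprod.inl ≫ coprod.inr) (f ≫ coprod.map (𝟙 A) coprod.inr) ≫
      coprod.map (𝟙 A) (coprod.desc (𝟙 X) (𝟙 X)) = coprod.desc coprod.inr f := by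
    ext <;> simp
  rw [h2] at hslide
  have hvan := T.vanishing_tensor (coprod.map (𝟙 X) (coprod.desc (𝟙 X) (𝟙 X)) ≫
    coprod.desc (coprod.inl ≫ coprod.inr) (f ≫ coprod.map (𝟙 A) coprod.inr))
  have hQ : (coprod.associator X X X).hom ≫ (coprod.map (𝟙 X) (coprod.desc (𝟙 X) (𝟙 X)) ≫
      coprod.desc (coprod.inl ≫ coprod.inr) (f ≫ coprod.map (𝟙 A) coprod.inr)) ≫
      (coprod.associator A X X).inv =
      coprod.map (coprod.desc (coprod.inr ≫ coprod.inl) (f ≫ coprod.map coprod.inl (𝟙 X)))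
        (𝟙 X) ≫
        coprod.desc (𝟙 ((A ⨿ X) ⨿ X)) (f ≫ coprod.map coprod.inl (𝟙 X)) := by
    ext <;> simp [coprod_map_eq, -coprod.desc_comp_inl_comp_inr]
  rw [hQ, T.tr_pre, T.s_eq] at hvan
  have hr : coprod.desc coprod.inr (f ≫ coprod.map coprod.inl (𝟙 X)) =
      coprod.desc coprod.inr f ≫
        (coprod.map coprod.inl (𝟙 X) : A ⨿ X ⟶ (A ⨿ X) ⨿ X) := by
    ext <;> simp
  rw [hr, T.tr_post] at hvan
  have hfin : coprod.desc (coprod.inr ≫ coprod.inl) (f ≫ coprod.map coprod.inl (𝟙 X)) ≫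
      coprod.desc (𝟙 (A ⨿ X)) (T.tr (coprod.desc coprod.inr f) ≫ coprod.inl) =
      coprod.desc (𝟙 X ≫ coprod.inr) (T.tr (coprod.desc f f) ≫ coprod.inl) := by
    rw [T.unroll]
    ext <;> simp
  rw [hfin, T.gy] at hvan
  rw [← hslide, hvan]
  simp

lemma iteration_eq {A X : C} (f : X ⟶ A ⨿ X) :
    T.tr (coprod.desc f f) = f ≫ coprod.desc (𝟙 A) (T.tr (coprod.desc f f)) := by
  conv_lhs => rw [T.unroll, T.fix_aux]

lemma diag_eq {A X : C} (f : X ⟶ (A ⨿ X) ⨿ X) :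
    T.tr (coprod.desc (𝟙 X) (𝟙 X) ≫ T.tr (coprod.desc (𝟙 X) (𝟙 X) ≫ f)) =
      T.tr (coprod.desc (𝟙 X) (𝟙 X) ≫ (f ≫ (coprod.associator A X X).hom ≫
        coprod.map (𝟙 A) (coprod.desc (𝟙 X) (𝟙 X)))) := by
  have hs := T.sliding (coprod.desc (𝟙 X) (𝟙 X) ≫ (f ≫ (coprod.associator A X X).hom))
    (coprod.desc (𝟙 X) (𝟙 X))
  have hv := T.vanishing_tensor (coprod.map (𝟙 X) (coprod.desc (𝟙 X) (𝟙 X)) ≫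
    (coprod.desc (𝟙 X) (𝟙 X) ≫ (f ≫ (coprod.associator A X X).hom)))
  have hN : (coprod.associator X X X).hom ≫ (coprod.map (𝟙 X) (coprod.desc (𝟙 X) (𝟙 X)) ≫
      (coprod.desc (𝟙 X) (𝟙 X) ≫ (f ≫ (coprod.associator A X X).hom))) ≫
      (coprod.associator A X X).inv =
      coprod.map (coprod.desc (𝟙 X) (𝟙 X)) (𝟙 X) ≫ (coprod.desc (𝟙 X) (𝟙 X) ≫ f) := by
    ext <;> simp [coprod_desc_eta]
  rw [hN, T.tr_pre] at hv
  have hF : coprod.desc (𝟙 X) (𝟙 X) ≫ (f ≫ (coprod.associator A X X).hom) ≫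
      coprod.map (𝟙 A) (coprod.desc (𝟙 X) (𝟙 X)) =
      coprod.desc (𝟙 X) (𝟙 X) ≫ (f ≫ (coprod.associator A X X).hom ≫
        coprod.map (𝟙 A) (coprod.desc (𝟙 X) (𝟙 X))) := by
    simp only [Category.assoc]
  rw [Category.assoc, hF] at hs
  rw [← hv, hs]

end CoprodTrace

namespace IterationOp

variable (it : IterationOp C)

lemma iter_inl (X : C) : it.iter (coprod.inl : X ⟶ X ⨿ X) = 𝟙 X := by
  have h := it.iteration (coprod.inl : X ⟶ X ⨿ X)
  simpa using h

/-- The Bekić (pairing) identity, derived from the Conway axioms. -/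
lemma bekic {B X Y : C} (k : X ⨿ Y ⟶ B ⨿ (X ⨿ Y)) :
    coprod.inl ≫ it.iter k =
      it.iter (coprod.inl ≫ k ≫ (coprod.associator B X Y).inv ≫
        coprod.desc (𝟙 (B ⨿ X)) (it.iter (coprod.inr ≫ k ≫ (coprod.associator B X Y).inv))) ∧
    coprod.inr ≫ it.iter k =
      it.iter (coprod.inr ≫ k ≫ (coprod.associator B X Y).inv) ≫
        coprod.desc (𝟙 B)
          (it.iter (coprod.inl ≫ k ≫ (coprod.associator B X Y).inv ≫
            coprod.desc (𝟙 (B ⨿ X))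
              (it.iter (coprod.inr ≫ k ≫ (coprod.associator B X Y).inv)))) := by
  obtain ⟨q, hq⟩ : ∃ q', q' = coprod.inr ≫ k ≫ (coprod.associator B X Y).inv := ⟨_, rfl⟩
  obtain ⟨p, hp⟩ : ∃ p', p' = coprod.inl ≫ k ≫ (coprod.associator B X Y).inv ≫
      coprod.desc (𝟙 (B ⨿ X)) (it.iter q) := ⟨_, rfl⟩
  rw [← hq, ← hp]
  obtain ⟨ψ, hψ⟩ : ∃ ψ', ψ' = (coprod.desc (coprod.inl ≫ coprod.inl)
      (coprod.desc (coprod.inl ≫ coprod.inr ≫ coprod.inl) coprod.inr) :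
        B ⨿ (X ⨿ Y) ⟶ (B ⨿ (X ⨿ Y)) ⨿ Y) := ⟨_, rfl⟩
  obtain ⟨G, hG⟩ : ∃ G', G' = k ≫ ψ ≫ coprod.map (𝟙 (B ⨿ (X ⨿ Y))) (coprod.inr : Y ⟶ X ⨿ Y) := ⟨_, rfl⟩
  -- the double dagger of `G` is `iter k`
  have hGk : it.iter (it.iter G) = it.iter k := by
    have hd := it.diagonal G
    have hψc : ψ ≫ coprod.map (𝟙 (B ⨿ (X ⨿ Y))) coprod.inr ≫
        (coprod.associator B (X ⨿ Y) (X ⨿ Y)).hom ≫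
        coprod.map (𝟙 B) (coprod.desc (𝟙 (X ⨿ Y)) (𝟙 (X ⨿ Y))) = 𝟙 (B ⨿ (X ⨿ Y)) := by
      rw [hψ]
      ext <;> simp
    have hc : G ≫ (coprod.associator B (X ⨿ Y) (X ⨿ Y)).hom ≫
        coprod.map (𝟙 B) (coprod.desc (𝟙 (X ⨿ Y)) (𝟙 (X ⨿ Y))) = k := by
      rw [hG]
      simp only [Category.assoc]
      rw [hψc, Category.comp_id]
    rw [hd, hc]
  -- the `Y` component of `iter G`
  have hinr : coprod.inr ≫ it.iter G = it.iter q ≫ coprod.map (𝟙 B) coprod.inl := by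
    have hψfac : ψ = (coprod.associator B X Y).inv ≫
        coprod.map (coprod.map (𝟙 B) coprod.inl) (𝟙 Y) := by
      rw [hψ]
      ext <;> simp
    have hdin := it.dinatural (k ≫ ψ) (coprod.inr : Y ⟶ X ⨿ Y)
    have e1 : (k ≫ ψ) ≫ coprod.map (𝟙 (B ⨿ (X ⨿ Y))) coprod.inr = G := by
      rw [hG, Category.assoc]
    have e2 : coprod.inr ≫ (k ≫ ψ) =
        q ≫ coprod.map (coprod.map (𝟙 B) coprod.inl) (𝟙 Y) := by
      rw [hq, hψfac]
      simp only [Category.assoc]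
    rw [e1, e2, it.natural] at hdin
    exact hdin
  -- the `X` component of `iter G`
  have hinl : coprod.inl ≫ it.iter G = p ≫ coprod.map (𝟙 B) coprod.inl := by
    have hit := it.iteration G
    have hF5 : ψ ≫ coprod.map (𝟙 (B ⨿ (X ⨿ Y))) coprod.inr ≫
        coprod.desc (𝟙 (B ⨿ (X ⨿ Y))) (it.iter G) =
        (coprod.associator B X Y).inv ≫ coprod.desc (𝟙 (B ⨿ X)) (it.iter q) ≫
          coprod.map (𝟙 B) coprod.inl := by
      rw [hψ]
      ext <;> simp [hinr]
    calc coprod.inl ≫ it.iter G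
        = coprod.inl ≫ G ≫ coprod.desc (𝟙 (B ⨿ (X ⨿ Y))) (it.iter G) := by
          conv_lhs => rw [hit]
      _ = coprod.inl ≫ k ≫ ψ ≫ coprod.map (𝟙 (B ⨿ (X ⨿ Y))) coprod.inr ≫
            coprod.desc (𝟙 (B ⨿ (X ⨿ Y))) (it.iter G) := by
          rw [hG]; simp only [Category.assoc]
      _ = coprod.inl ≫ k ≫ (coprod.associator B X Y).inv ≫
            coprod.desc (𝟙 (B ⨿ X)) (it.iter q) ≫ coprod.map (𝟙 B) coprod.inl := by
          rw [hF5]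
      _ = p ≫ coprod.map (𝟙 B) coprod.inl := by
          rw [hp]; simp only [Category.assoc]
  have hiterG : it.iter G = coprod.desc p (it.iter q) ≫ coprod.map (𝟙 B) coprod.inl := by
    apply coprod.hom_ext
    · rw [hinl]; simp
    · rw [hinr]; simp
  have hb1 : coprod.inl ≫ it.iter k = it.iter p := by
    rw [← hGk, hiterG]
    have hdin := it.dinatural (coprod.desc p (it.iter q)) (coprod.inl : X ⟶ X ⨿ Y)
    simpa using hdin
  refine ⟨hb1, ?_⟩
  have hit2 := it.iteration (it.iter G)
  have h5 : coprod.inr ≫ it.iter (it.iter G) =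
      (coprod.inr ≫ it.iter G) ≫ coprod.desc (𝟙 B) (it.iter (it.iter G)) := by
    conv_lhs => rw [hit2]
    rw [← Category.assoc]
  rw [hGk] at h5
  rw [h5, hinr, ← hb1]
  simp

end IterationOp

end Aux

attribute [local simp] coprod.inl_desc coprod.inr_desc coprod.inl_desc_assoc coprod.inr_desc_assoc

/-- (Căzănescu–Ştefănescu) In a category with finite coproducts, traces and iteration
operators determine each other: precomposing a trace with the codiagonal yields an
iteration operator (satisfying the iteration equation and the diagonal property, and
being natural and dinatural), and conversely every iteration operator arises in this way
from some trace. -/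
theorem coprod_trace_iff_iteration :
    (∀ T : CoprodTrace C,
      ∃ it : IterationOp C, ∀ {A X : C} (f : X ⟶ A ⨿ X),
        it.iter f = T.tr (coprod.desc (𝟙 X) (𝟙 X) ≫ f)) ∧
    (∀ it : IterationOp C, ∃ T : CoprodTrace C, ∀ {A X : C} (f : X ⟶ A ⨿ X),
      T.tr (coprod.desc (𝟙 X) (𝟙 X) ≫ f) = it.iter f) := by
  constructor
  · -- a trace gives an iteration operator
    intro T
    have hdesc : ∀ {A X : C} (f : X ⟶ A ⨿ X),
        coprod.desc (𝟙 X) (𝟙 X) ≫ f = coprod.desc f f := by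
      intro A X f; simp
    refine ⟨⟨fun {A X} f => T.tr (coprod.desc (𝟙 X) (𝟙 X) ≫ f), ?_, ?_, ?_, ?_⟩,
      fun {A X} f => rfl⟩
    · -- naturality
      intro A B X f g
      rw [show coprod.desc (𝟙 X) (𝟙 X) ≫ (f ≫ coprod.map g (𝟙 X)) =
          (coprod.desc (𝟙 X) (𝟙 X) ≫ f) ≫ coprod.map g (𝟙 X) from by
        simp only [Category.assoc], T.tr_post]
    · -- dinaturality
      intro A X Y f g
      rw [← T.tr_pre (coprod.desc (𝟙 X) (𝟙 X) ≫ (f ≫ coprod.map (𝟙 A) g)) g]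
      have hE : coprod.map g (𝟙 X) ≫ coprod.desc (𝟙 X) (𝟙 X) ≫ (f ≫ coprod.map (𝟙 A) g) =
          (coprod.map g (𝟙 X) ≫ coprod.desc (𝟙 X) (𝟙 X) ≫ f) ≫ coprod.map (𝟙 A) g := by
        simp only [Category.assoc]
      rw [hE, ← T.sliding (coprod.map g (𝟙 X) ≫ coprod.desc (𝟙 X) (𝟙 X) ≫ f) g]
      have hE2 : coprod.map (𝟙 Y) g ≫ coprod.map g (𝟙 X) ≫ coprod.desc (𝟙 X) (𝟙 X) ≫ f =
          coprod.desc (𝟙 Y) (𝟙 Y) ≫ (g ≫ f) := by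
        ext <;> simp
      rw [hE2]
    · -- iteration equation
      intro A X f
      rw [hdesc f]
      exact T.iteration_eq f
    · -- diagonal
      intro A X f
      exact T.diag_eq f
  · -- an iteration operator gives a trace
    intro it
    refine ⟨⟨fun {A B X} f =>
        coprod.inl ≫ f ≫ coprod.desc (𝟙 B) (it.iter (coprod.inr ≫ f)),
        ?_, ?_, ?_, ?_, ?_, ?_⟩, ?_⟩
    · -- tightening
      intro A A' B B' X f g h
      have h1 : coprod.inr ≫ coprod.map h (𝟙 X) ≫ f ≫ coprod.map g (𝟙 X) =
          (coprod.inr ≫ f) ≫ coprod.map g (𝟙 X) := by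
        simp
      rw [h1, it.natural]
      have h2 : coprod.map g (𝟙 X) ≫ coprod.desc (𝟙 B') (it.iter (coprod.inr ≫ f) ≫ g) =
          coprod.desc (𝟙 B) (it.iter (coprod.inr ≫ f)) ≫ g := by
        ext <;> simp
      slice_lhs 1 2 => rw [coprod.inl_map]
      simp only [Category.assoc]
      rw [h2]
    · -- sliding
      intro A B X Y f g
      have e1 : coprod.inr ≫ coprod.map (𝟙 A) g ≫ f = g ≫ (coprod.inr ≫ f) := by
        simp
      have e2 : coprod.inr ≫ f ≫ coprod.map (𝟙 B) g =
          (coprod.inr ≫ f) ≫ coprod.map (𝟙 B) g := by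
        simp only [Category.assoc]
      rw [e1, e2, ← it.dinatural (coprod.inr ≫ f) g]
      simp
    · -- vanishing zero
      intro A B f
      have h0 : it.iter (coprod.inr ≫ f) = initial.to B := initial.hom_ext _ _
      rw [h0]
    · -- vanishing tensor
      intro A B X Y f
      obtain ⟨hb1, hb2⟩ := it.bekic (coprod.inr ≫ f)
      obtain ⟨q, hq⟩ : ∃ q',
          q' = coprod.inr ≫ (coprod.inr ≫ f) ≫ (coprod.associator B X Y).inv := ⟨_, rfl⟩
      obtain ⟨p, hp⟩ : ∃ p', p' = coprod.inl ≫ (coprod.inr ≫ f) ≫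
          (coprod.associator B X Y).inv ≫ coprod.desc (𝟙 (B ⨿ X))
            (it.iter (coprod.inr ≫ (coprod.inr ≫ f) ≫ (coprod.associator B X Y).inv)) :=
        ⟨_, rfl⟩
      rw [← hq] at hb1 hb2 hp
      rw [← hp] at hb1 hb2
      simp only [Category.assoc]
      have e1 : coprod.inr ≫ (coprod.associator A X Y).hom ≫ f ≫
          (coprod.associator B X Y).inv = q := by
        rw [hq]; simp
      rw [e1]
      have e3 : coprod.inr ≫ coprod.inl ≫ (coprod.associator A X Y).hom ≫ f ≫
          (coprod.associator B X Y).inv ≫ coprod.desc (𝟙 (B ⨿ X)) (it.iter q) = p := by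
        rw [hp]; simp
      rw [e3]
      have hkey : (coprod.associator B X Y).inv ≫ coprod.desc (𝟙 (B ⨿ X)) (it.iter q) ≫
          coprod.desc (𝟙 B) (it.iter p) =
          coprod.desc (𝟙 B) (it.iter (coprod.inr ≫ f)) := by
        ext <;> simp [hb1, hb2]
      rw [hkey]
      simp
    · -- strength
      intro U V A B X g F
      have e1 : coprod.inr ≫ (coprod.associator U A X).hom ≫ coprod.map g F ≫
          (coprod.associator V B X).inv = (coprod.inr ≫ F) ≫ coprod.map coprod.inr (𝟙 X) := by
        simp [coprod_map_eq, -coprod.desc_comp_inl_comp_inr]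
      rw [e1, it.natural]
      ext <;> simp
    · -- yanking
      intro X
      have h1 : coprod.inr ≫ (coprod.braiding X X).hom = coprod.inl := by simp
      rw [h1, it.iter_inl]
      simp
    · -- compatibility
      intro A X f
      dsimp only
      have h1 : coprod.inr ≫ coprod.desc (𝟙 X) (𝟙 X) ≫ f = f := by simp
      rw [h1]
      have h2 : coprod.inl ≫ (coprod.desc (𝟙 X) (𝟙 X) ≫ f) ≫
          coprod.desc (𝟙 A) (it.iter f) = f ≫ coprod.desc (𝟙 A) (it.iter f) := by
        simp
      rw [h2, ← it.iteration]
end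

section
/- In a right autonomous dagger monoidal category, the family of isomorphisms i_A : A → A** defined by i_A = (id_{A**} ⊗ η_A†) ∘ (η_{A*} ⊗ id_A) (up to unitors) is natural in A if and only if every morphism f satisfies (f*)† = (f†)*. -/
/-!
`i_A` is the comparison isomorphism between two right duals of `Aᘁ`: the chosen one `Aᘁᘁ`,
and `A` itself, paired with `Aᘁ` through the daggers `ε†`, `η†` of the chosen pairing.
Comparison isomorphisms intertwine adjoint mates, so the naturality square of `i` at `f`
holds iff `f` is the mate of `fᘁ` with respect to the dagger pairings. Taking daggers turns
that mate into the left mate of `(fᘁ)†`, and left mates invert right mates; hence the square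
commutes iff `(f†)ᘁ = (fᘁ)†`, one morphism at a time.
-/

open CategoryTheory MonoidalCategory

/-- A dagger monoidal structure: an involutive identity-on-objects contravariant functor
compatible with the tensor, for which the structural isomorphisms are unitary. -/
structure DaggerMonoidalStruct (C : Type*) [Category C] [MonoidalCategory C] where
  dag : ∀ {A B : C}, (A ⟶ B) → (B ⟶ A)
  dag_id : ∀ A : C, dag (𝟙 A) = 𝟙 A
  dag_comp : ∀ {A B D : C} (f : A ⟶ B) (g : B ⟶ D), dag (f ≫ g) = dag g ≫ dag f
  dag_dag : ∀ {A B : C} (f : A ⟶ B), dag (dag f) = f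
  dag_tensor : ∀ {A B A' B' : C} (f : A ⟶ A') (g : B ⟶ B'),
    dag (f ⊗ₘ g) = dag f ⊗ₘ dag g
  dag_assoc : ∀ A B D : C, dag (α_ A B D).hom = (α_ A B D).inv
  dag_leftUnitor : ∀ A : C, dag (λ_ A).hom = (λ_ A).inv
  dag_rightUnitor : ∀ A : C, dag (ρ_ A).hom = (ρ_ A).inv

section AdjointMates

variable {C : Type*} [Category C] [MonoidalCategory C]

theorem leftAdjointMate_rightAdjointMate {X Y : C} [HasRightDual X] [HasRightDual Y]
    (f : X ⟶ Y) : (ᘁ(fᘁ) : X ⟶ Y) = f := by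
  change (λ_ X).inv ≫ η_ Y Yᘁ ▷ X ≫ (Y ◁ fᘁ) ▷ X ≫ (α_ Y Xᘁ X).hom ≫
    Y ◁ ε_ X Xᘁ ≫ (ρ_ Y).hom = f
  rw [← comp_whiskerRight_assoc, coevaluation_comp_rightAdjointMate,
    comp_whiskerRight_assoc, associator_naturality_left_assoc,
    ← whisker_exchange_assoc, ExactPairing.evaluation_coevaluation_assoc]
  simp

theorem rightAdjointMate_leftAdjointMate {X Y : C} [HasRightDual X] [HasRightDual Y]
    (g : Yᘁ ⟶ Xᘁ) : (ᘁg : X ⟶ Y)ᘁ = g := by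
  have h : (Yᘁ : C) ◁ (ᘁg : X ⟶ Y) ≫ ε_ Y Yᘁ = g ▷ X ≫ ε_ X Xᘁ :=
    leftAdjointMate_comp_evaluation g
  calc
    _ = 𝟙 _ ⊗≫ (Yᘁ : C) ◁ η_ X Xᘁ ⊗≫
          ((Yᘁ : C) ◁ (ᘁg : X ⟶ Y) ≫ ε_ Y Yᘁ) ▷ (Xᘁ : C) ⊗≫ 𝟙 _ := by
      dsimp only [rightAdjointMate]; monoidal
    _ = 𝟙 _ ⊗≫ ((Yᘁ : C) ◁ η_ X Xᘁ ≫ g ▷ (X ⊗ (Xᘁ : C))) ⊗≫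
          ε_ X Xᘁ ▷ (Xᘁ : C) ⊗≫ 𝟙 _ := by
      rw [h]; monoidal
    _ = g ⊗≫ ((Xᘁ : C) ◁ η_ X Xᘁ ⊗≫ ε_ X Xᘁ ▷ (Xᘁ : C)) ⊗≫ 𝟙 _ := by
      rw [whisker_exchange]; monoidal
    _ = g := by
      rw [ExactPairing.coevaluation_evaluation'']; monoidal

def rightAdjointMateEquiv (X Y : C) [HasRightDual X] [HasRightDual Y] :
    (X ⟶ Y) ≃ (Yᘁ ⟶ Xᘁ) where
  toFun f := fᘁ
  invFun g := ᘁg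
  left_inv := leftAdjointMate_rightAdjointMate
  right_inv := rightAdjointMate_leftAdjointMate

theorem rightAdjointMate_comp_rightDualIso_hom {X Y X₁ X₂ Y₁ Y₂ : C}
    (p₁ : ExactPairing X X₁) (p₂ : ExactPairing X X₂)
    (q₁ : ExactPairing Y Y₁) (q₂ : ExactPairing Y Y₂) (f : X ⟶ Y) :
    @rightAdjointMate C _ _ X Y ⟨X₁⟩ ⟨Y₁⟩ f ≫ (rightDualIso p₁ p₂).hom =
      (rightDualIso q₁ q₂).hom ≫ @rightAdjointMate C _ _ X Y ⟨X₂⟩ ⟨Y₂⟩ f := by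
  have h₁ := @comp_rightAdjointMate C _ _ X X Y ⟨X₂⟩ ⟨X₁⟩ ⟨Y₁⟩ (𝟙 X) f
  have h₂ := @comp_rightAdjointMate C _ _ X Y Y ⟨X₂⟩ ⟨Y₂⟩ ⟨Y₁⟩ f (𝟙 Y)
  rw [Category.id_comp] at h₁
  rw [Category.comp_id] at h₂
  exact h₁.symm.trans h₂

end AdjointMates

namespace DaggerMonoidalStruct

variable {C : Type*} [Category C] [MonoidalCategory C] (D : DaggerMonoidalStruct C)

theorem dag_inj {A B : C} {f g : A ⟶ B} : D.dag f = D.dag g ↔ f = g :=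
  ⟨fun h => by rw [← D.dag_dag f, h, D.dag_dag], congrArg D.dag⟩

theorem dag_whiskerLeft (X : C) {A B : C} (f : A ⟶ B) : D.dag (X ◁ f) = X ◁ D.dag f := by
  rw [← id_tensorHom, ← id_tensorHom, D.dag_tensor, D.dag_id]

theorem dag_whiskerRight {A B : C} (f : A ⟶ B) (X : C) : D.dag (f ▷ X) = D.dag f ▷ X := by
  rw [← tensorHom_id, ← tensorHom_id, D.dag_tensor, D.dag_id]

theorem dag_assoc_inv (A B E : C) : D.dag (α_ A B E).inv = (α_ A B E).hom := by
  rw [← D.dag_assoc, D.dag_dag]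

theorem dag_leftUnitor_inv (A : C) : D.dag (λ_ A).inv = (λ_ A).hom := by
  rw [← D.dag_leftUnitor, D.dag_dag]

theorem dag_rightUnitor_inv (A : C) : D.dag (ρ_ A).inv = (ρ_ A).hom := by
  rw [← D.dag_rightUnitor, D.dag_dag]

@[reducible] def daggerPairing (X Y : C) [ExactPairing X Y] : ExactPairing Y X where
  coevaluation' := D.dag (ε_ X Y)
  evaluation' := D.dag (η_ X Y)
  coevaluation_evaluation' := by
    rw [← D.dag_inj]
    simp only [D.dag_comp, dag_whiskerLeft, dag_whiskerRight, D.dag_dag, dag_assoc_inv,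
      dag_leftUnitor_inv, D.dag_rightUnitor, Category.assoc,
      ExactPairing.evaluation_coevaluation]
  evaluation_coevaluation' := by
    rw [← D.dag_inj]
    simp only [D.dag_comp, dag_whiskerLeft, dag_whiskerRight, D.dag_dag, D.dag_assoc,
      D.dag_leftUnitor, dag_rightUnitor_inv, Category.assoc,
      ExactPairing.coevaluation_evaluation]

@[reducible] def daggerRightDual (X : C) [HasRightDual X] : HasRightDual Xᘁ :=
  @HasRightDual.mk _ _ _ Xᘁ X (D.daggerPairing X Xᘁ)

theorem dag_rightAdjointMate_daggerRightDual {X Y : C} [HasRightDual X] [HasRightDual Y]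
    (h : Xᘁ ⟶ Yᘁ) :
    D.dag (@rightAdjointMate C _ _ Xᘁ Yᘁ (D.daggerRightDual X) (D.daggerRightDual Y) h) =
      (ᘁ(D.dag h) : X ⟶ Y) := by
  change D.dag ((ρ_ Y).inv ≫ Y ◁ D.dag (ε_ X Xᘁ) ≫ Y ◁ h ▷ X ≫ (α_ Y Yᘁ X).inv ≫
      D.dag (η_ Y Yᘁ) ▷ X ≫ (λ_ X).hom) =
    (λ_ X).inv ≫ η_ Y Yᘁ ▷ X ≫ (Y ◁ D.dag h) ▷ X ≫ (α_ Y Xᘁ X).hom ≫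
      Y ◁ ε_ X Xᘁ ≫ (ρ_ Y).hom
  simp only [D.dag_comp, D.dag_whiskerLeft, D.dag_whiskerRight, D.dag_dag, D.dag_assoc_inv,
    D.dag_leftUnitor, D.dag_rightUnitor_inv, Category.assoc]
  monoidal

end DaggerMonoidalStruct

variable {C : Type*} [Category C] [MonoidalCategory C] [RightRigidCategory C]

/-- The canonical map `i_A : A ⟶ Aᘁᘁ` of a right autonomous dagger monoidal category,
defined (up to unitors) from the coevaluation of `Aᘁ` and the dagger of the coevaluation
of `A`. -/
noncomputable def daggerPivMap (D : DaggerMonoidalStruct C) (A : C) : A ⟶ ((Aᘁ)ᘁ : C) :=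
  (ρ_ A).inv ≫ (A ◁ η_ (Aᘁ : C) ((Aᘁ)ᘁ)) ≫ (α_ A (Aᘁ : C) (((Aᘁ)ᘁ : C))).inv ≫
    ((D.dag (η_ A (Aᘁ))) ▷ (((Aᘁ)ᘁ : C))) ≫ (λ_ (((Aᘁ)ᘁ : C))).hom

theorem daggerPivMap_eq_rightDualIso_hom (D : DaggerMonoidalStruct C) (A : C) :
    daggerPivMap D A = (rightDualIso (D.daggerPairing A Aᘁ) inferInstance).hom := by
  simp only [rightDualIso, rightAdjointMate, id_whiskerRight, whiskerLeft_id, Category.id_comp]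
  rfl

instance isIso_daggerPivMap (D : DaggerMonoidalStruct C) (A : C) : IsIso (daggerPivMap D A) := by
  rw [daggerPivMap_eq_rightDualIso_hom]
  infer_instance

theorem daggerPivMap_naturality_iff (D : DaggerMonoidalStruct C) {A B : C} (f : A ⟶ B) :
    f ≫ daggerPivMap D B = daggerPivMap D A ≫ fᘁᘁ ↔ D.dag (fᘁ) = (D.dag f)ᘁ := by
  let f' : A ⟶ B :=
    @rightAdjointMate C _ _ Bᘁ Aᘁ (D.daggerRightDual B) (D.daggerRightDual A) (fᘁ)
  have square : f' ≫ daggerPivMap D B = daggerPivMap D A ≫ fᘁᘁ := by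
    simpa only [daggerPivMap_eq_rightDualIso_hom] using
      rightAdjointMate_comp_rightDualIso_hom (D.daggerPairing B Bᘁ) inferInstance
        (D.daggerPairing A Aᘁ) inferInstance (fᘁ)
  calc f ≫ daggerPivMap D B = daggerPivMap D A ≫ fᘁᘁ
      ↔ f ≫ daggerPivMap D B = f' ≫ daggerPivMap D B := by rw [square]
    _ ↔ f = f' := cancel_mono _
    _ ↔ D.dag f = ᘁ(D.dag (fᘁ)) := by rw [← D.dag_inj, D.dag_rightAdjointMate_daggerRightDual]
    _ ↔ (D.dag f)ᘁ = D.dag (fᘁ) := (rightAdjointMateEquiv B A).eq_symm_apply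
    _ ↔ D.dag (fᘁ) = (D.dag f)ᘁ := eq_comm

/-- In a right autonomous dagger monoidal category, the family `i_A : A ⟶ Aᘁᘁ` is
natural in `A` if and only if every morphism `f` satisfies `(f*)† = (f†)*`. -/
theorem daggerPivMap_natural_iff_mate_dagger (D : DaggerMonoidalStruct C) :
    (∀ {A B : C} (f : A ⟶ B), f ≫ daggerPivMap D B = daggerPivMap D A ≫ ((fᘁ)ᘁ)) ↔
    (∀ {A B : C} (f : A ⟶ B), D.dag (fᘁ) = ((D.dag f)ᘁ)) :=
  ⟨fun h _ _ f => (daggerPivMap_naturality_iff D f).1 (h f),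
    fun h _ _ f => (daggerPivMap_naturality_iff D f).2 (h f)⟩
end
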